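/- For any starting point s_0 ≥ 2, the sequence of increments (S_{n+1} − S_n)_{n∈ℕ} of the h-transformed peeling chain started at s_0 stochastically dominates the sequence of increments (Ŝ_{n+1} − Ŝ_n)_{n∈ℕ} of the unconditioned random walk started at s_0: for every n ≥ 1 and every bounded function F : ℤ^n → ℝ which is non-decreasing in each coordinate, E_{peel,s_0}[F(S_1−S_0, …, S_n−S_{n−1})] ≥ E_{rw,s_0}[F(Ŝ_1−Ŝ_0, …, Ŝ_n−Ŝ_{n−1})]. -/

import Mathlib

open MeasureTheory ProbabilityTheory

/-- The step distribution of the peeling random walk for type II triangulations. -/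
noncomputable def pStep : ℤ → ℝ := fun k =>
  if k = 1 then 2 / 3
  else if k ≤ -1 then
    2 * (Nat.factorial (2 * (-k).toNat - 2) : ℝ) /
      (4 ^ (-k).toNat * (Nat.factorial ((-k).toNat - 1) : ℝ) *
        (Nat.factorial ((-k).toNat + 1) : ℝ))
  else 0

/-- The harmonic function `h(k) = Γ(k+1/2)/Γ(k)` for `k ≥ 1`, `h(k) = 0` for `k ≤ 0`. -/
noncomputable def hFun : ℤ → ℝ := fun k =>
  if 1 ≤ k then Real.Gamma ((k : ℝ) + 1 / 2) / Real.Gamma (k : ℝ) else 0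

/-- Transition kernel of the peeling (h-transformed) chain on `{2,3,…}`. -/
noncomputable def peelKernel (s m : ℤ) : ℝ := hFun (m - 1) / hFun (s - 1) * pStep (m - s)

open scoped ENNReal

/-!
From a state `s ≥ 2` the peeling chain makes the step `k` with probability
`h(s+k-1)/h(s-1) · p_k`, a tilt of the walk's step law `p` by a ratio that is non-decreasing
in `k`, because `h(k+1) = (k+1/2)/k · h(k)`. Such a tilt dominates stochastically: for a
threshold `c` with `g ≤ c` where the ratio is `< 1` and `g ≥ c` where it is `≥ 1`, every term
of `∑ (q_k - p_k)(g_k - c)` is non-negative for non-decreasing `g`. Conditioning on the first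
increment, the walk's expectation of a monotone `F` of the remaining increments is a
non-decreasing function of the first one that does not depend on the current state, so the
one-step comparison and induction on the number of increments compose. That both kernels are
stochastic at every reachable state is read off from the finite-dimensional distributions.
-/

theorem pStep_nonneg (k : ℤ) : 0 ≤ pStep k := by
  unfold pStep
  split_ifs <;> positivity

theorem pStep_one : pStep 1 = 2 / 3 := if_pos rfl

theorem pStep_pos_of_le_neg_one {k : ℤ} (hk : k ≤ -1) : 0 < pStep k := by
  rw [pStep, if_neg (by omega), if_pos hk]
  positivity

theorem hFun_eq_zero {k : ℤ} (hk : k ≤ 0) : hFun k = 0 :=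
  if_neg (by omega)

theorem hFun_pos {k : ℤ} (hk : 1 ≤ k) : 0 < hFun k := by
  have hk' : (0 : ℝ) < k := by exact_mod_cast hk
  rw [hFun, if_pos hk]
  exact div_pos (Real.Gamma_pos_of_pos (by linarith)) (Real.Gamma_pos_of_pos hk')

theorem hFun_nonneg (k : ℤ) : 0 ≤ hFun k := by
  rcases le_or_gt k 0 with hk | hk
  · exact (hFun_eq_zero hk).ge
  · exact (hFun_pos hk).le

theorem hFun_add_one {k : ℤ} (hk : 1 ≤ k) : hFun (k + 1) = (k + 1 / 2) / k * hFun k := by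
  have hk' : (0 : ℝ) < k := by exact_mod_cast hk
  rw [hFun, hFun, if_pos hk, if_pos (by omega)]
  push_cast
  rw [add_right_comm, Real.Gamma_add_one (by positivity), Real.Gamma_add_one hk'.ne']
  field_simp

theorem hFun_monotone : Monotone hFun := by
  refine monotone_int_of_le_succ fun k => ?_
  rcases le_or_gt k 0 with hk | hk
  · rw [hFun_eq_zero hk]
    exact hFun_nonneg _
  · have hk' : (0 : ℝ) < k := by exact_mod_cast hk
    rw [hFun_add_one hk]
    exact le_mul_of_one_le_left (hFun_nonneg k) ((one_le_div hk').2 (by linarith))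

theorem peelKernel_nonneg (s m : ℤ) : 0 ≤ peelKernel s m :=
  mul_nonneg (div_nonneg (hFun_nonneg _) (hFun_nonneg _)) (pStep_nonneg _)

theorem two_le_of_peelKernel_ne_zero {s m : ℤ} (h : peelKernel s m ≠ 0) : 2 ≤ m := by
  by_contra! hm
  exact h (by rw [peelKernel, hFun_eq_zero (by omega), zero_div, zero_mul])

theorem peelKernel_pos {s m : ℤ} (hs : 2 ≤ s) (hm : 2 ≤ m) (hp : 0 < pStep (m - s)) :
    0 < peelKernel s m :=
  mul_pos (div_pos (hFun_pos (by omega)) (hFun_pos (by omega))) hp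

theorem peelKernel_add (s k : ℤ) :
    peelKernel s (s + k) = hFun (s + k - 1) / hFun (s - 1) * pStep k := by
  rw [peelKernel, add_sub_cancel_left]

theorem exists_path_peelKernel_pos {s₀ s : ℤ} (hs₀ : 2 ≤ s₀) (hs : 2 ≤ s) :
    ∃ (N : ℕ) (m : ℕ → ℤ), m 0 = s₀ ∧ m N = s ∧ ∀ i < N, 0 < peelKernel (m i) (m (i + 1)) := by
  -- climb by steps `+1` from `s₀` above `s`, then jump down to `s`
  set j := (s + 1 - s₀).toNat
  have hj : s + 1 ≤ s₀ + j := by have := Int.self_le_toNat (s + 1 - s₀); omega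
  refine ⟨j + 1, fun i => if i ≤ j then s₀ + i else s, by simp, by simp, fun i hi => ?_⟩
  rcases Nat.lt_or_ge i j with hij | hij
  · dsimp only
    rw [if_pos hij.le, if_pos (show i + 1 ≤ j by omega)]
    refine peelKernel_pos (by omega) (by omega) ?_
    rw [show s₀ + ↑(i + 1) - (s₀ + i) = 1 by push_cast; ring, pStep_one]
    norm_num
  · obtain rfl : i = j := by omega
    dsimp only
    rw [if_pos le_rfl, if_neg (by omega)]
    exact peelKernel_pos (by omega) hs (pStep_pos_of_le_neg_one (by omega))

theorem tsum_mul_le_tsum_mul_of_monotone_ratio {ι : Type*} [LinearOrder ι] {p r g : ι → ℝ≥0∞}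
    (hp : ∑' i, p i ≠ ⊤) (hrp : ∑' i, r i * p i = ∑' i, p i) (hr : Monotone r)
    (hg : Monotone g) {M : ℝ≥0∞} (hM : M ≠ ⊤) (hgM : ∀ i, g i ≤ M) :
    ∑' i, p i * g i ≤ ∑' i, r i * p i * g i := by
  -- `hterm` is `(r - 1) * p * (g - c) ≥ 0`, rearranged so that no subtraction occurs in `ℝ≥0∞`.
  set c := ⨆ (i) (_ : r i < 1), g i
  have hc : c ≠ ⊤ := ne_top_of_le_ne_top hM (iSup₂_le fun i _ => hgM i)
  have hterm : ∀ i, p i * g i + c * (r i * p i) ≤ r i * p i * g i + c * p i := by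
    intro i
    rcases lt_or_ge (r i) 1 with hri | hri
    · obtain ⟨u, hu⟩ : ∃ u, c = g i + u :=
        exists_add_of_le (le_iSup₂ (f := fun i (_ : r i < 1) => g i) i hri)
      rw [hu]
      calc p i * g i + (g i + u) * (r i * p i)
          = r i * p i * g i + g i * p i + u * (r i * p i) := by ring
        _ ≤ r i * p i * g i + g i * p i + u * p i := by
            gcongr; exact mul_le_of_le_one_left' hri.le
        _ = r i * p i * g i + (g i + u) * p i := by ring
    · have hcg : c ≤ g i := iSup₂_le fun j hj => hg (hr.reflect_lt (hj.trans_le hri)).le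
      obtain ⟨u, hu⟩ := exists_add_of_le hcg
      obtain ⟨t, ht⟩ := exists_add_of_le hri
      rw [hu, ht]
      calc p i * (c + u) + c * ((1 + t) * p i)
          = (1 + t) * p i * c + p i * u + c * p i := by ring
        _ ≤ (1 + t) * p i * c + p i * u + c * p i + t * p i * u := le_self_add
        _ = (1 + t) * p i * (c + u) + c * p i := by ring
  have hsum := ENNReal.tsum_le_tsum hterm
  rw [ENNReal.tsum_add, ENNReal.tsum_add, ENNReal.tsum_mul_left, ENNReal.tsum_mul_left,
    hrp] at hsum
  exact ENNReal.le_of_add_le_add_right (ENNReal.mul_ne_top hc hp) hsum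

theorem tsum_fin_succ_eq_tsum_cons {α : Type*} {n : ℕ} (f : (Fin (n + 1) → α) → ℝ≥0∞) :
    ∑' x, f x = ∑' (a : α) (y : Fin n → α), f (Fin.cons a y) := by
  rw [← (Fin.consEquiv fun _ => α).tsum_eq, ← ENNReal.tsum_prod]
  rfl

theorem tsum_prod_apply_eq_pow {α : Type*} (p : α → ℝ≥0∞) (n : ℕ) :
    ∑' x : Fin n → α, ∏ i, p (x i) = (∑' a, p a) ^ n := by
  induction n with
  | zero => simp
  | succ n ih =>
    simp_rw [tsum_fin_succ_eq_tsum_cons, Fin.prod_univ_succ, Fin.cons_zero, Fin.cons_succ,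
      ENNReal.tsum_mul_left, ih, ENNReal.tsum_mul_right, pow_succ']

/-- The weight of the increment vector `x` for a walk started at `s` whose increment out of the
state `s` has law `K s`. -/
noncomputable def pathWeight (K : ℤ → ℤ → ℝ≥0∞) : ℤ → (n : ℕ) → (Fin n → ℤ) → ℝ≥0∞
  | _, 0, _ => 1
  | s, n + 1, x => K s (x 0) * pathWeight K (s + x 0) n (Fin.tail x)

theorem pathWeight_zero (K : ℤ → ℤ → ℝ≥0∞) (s : ℤ) (x : Fin 0 → ℤ) :
    pathWeight K s 0 x = 1 := by
  rw [pathWeight]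

theorem pathWeight_cons (K : ℤ → ℤ → ℝ≥0∞) (s : ℤ) {n : ℕ} (k : ℤ) (y : Fin n → ℤ) :
    pathWeight K s (n + 1) (Fin.cons k y) = K s k * pathWeight K (s + k) n y := by
  rw [pathWeight, Fin.cons_zero, Fin.tail_cons]

theorem pathWeight_const (p : ℤ → ℝ≥0∞) (s : ℤ) {n : ℕ} (x : Fin n → ℤ) :
    pathWeight (fun _ => p) s n x = ∏ i, p (x i) := by
  induction n generalizing s with
  | zero => rw [pathWeight_zero, Fin.prod_univ_zero]
  | succ n ih => rw [pathWeight, ih, Fin.prod_univ_succ]; rfl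

/-- A walk whose step law from `s ∈ A` is the tilt `ρ s * p` of a fixed law `p` by a monotone
ratio `ρ s` has increments stochastically larger than those of the walk with i.i.d. steps `p`. -/
theorem tsum_prod_mul_le_tsum_pathWeight_mul {p : ℤ → ℝ≥0∞} {K ρ : ℤ → ℤ → ℝ≥0∞} {A : Set ℤ}
    (hp : ∑' k, p k = 1) (hK : ∀ s ∈ A, ∑' k, K s k = 1)
    (hKρ : ∀ s ∈ A, ∀ k, K s k = ρ s k * p k) (hρ : ∀ s ∈ A, Monotone (ρ s))
    (hA : ∀ s ∈ A, ∀ k, K s k ≠ 0 → s + k ∈ A) {M : ℝ≥0∞} (hM : M ≠ ⊤) :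
    ∀ (n : ℕ) (s : ℤ), s ∈ A → ∀ F : (Fin n → ℤ) → ℝ≥0∞, Monotone F → (∀ x, F x ≤ M) →
      ∑' x, (∏ i, p (x i)) * F x ≤ ∑' x, pathWeight K s n x * F x := by
  intro n
  induction n with
  | zero => intro s _ F _ _; simp_rw [pathWeight_zero, Fin.prod_univ_zero, le_rfl]
  | succ n ih =>
    intro s hs F hF hFM
    simp_rw [tsum_fin_succ_eq_tsum_cons, Fin.prod_univ_succ, Fin.cons_zero, Fin.cons_succ,
      pathWeight_cons, mul_assoc, ENNReal.tsum_mul_left]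
    have hFcons : ∀ k, Monotone fun y : Fin n → ℤ => F (Fin.cons k y) :=
      fun k y y' hy => hF (Fin.cons_le_cons.2 ⟨le_rfl, hy⟩)
    set g : ℤ → ℝ≥0∞ := fun k => ∑' y : Fin n → ℤ, (∏ i, p (y i)) * F (Fin.cons k y)
    have hg : Monotone g := fun k k' hk => ENNReal.tsum_le_tsum fun y =>
      mul_le_mul_right (hF (Fin.cons_le_cons.2 ⟨hk, le_rfl⟩)) _
    have hgM : ∀ k, g k ≤ M := fun k => calc
      g k ≤ ∑' y : Fin n → ℤ, (∏ i, p (y i)) * M := ENNReal.tsum_le_tsum fun y =>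
            mul_le_mul_right (hFM _) _
      _ = M := by rw [ENNReal.tsum_mul_right, tsum_prod_apply_eq_pow, hp, one_pow, one_mul]
    calc ∑' k, p k * g k ≤ ∑' k, ρ s k * p k * g k :=
          tsum_mul_le_tsum_mul_of_monotone_ratio (by simp [hp])
            (by simp_rw [← hKρ s hs, hK s hs, hp]) (hρ s hs) hg hM hgM
      _ = ∑' k, K s k * g k := by simp_rw [hKρ s hs]
      _ ≤ _ := ENNReal.tsum_le_tsum fun k => by
          by_cases hk : K s k = 0
          · simp [hk]
          · exact mul_le_mul_right (ih _ (hA s hs k hk) _ (hFcons k) fun y => hFM _) _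

section Paths

variable {Ω : Type*} {X : ℕ → Ω → ℤ}

def increments (X : ℕ → Ω → ℤ) (n : ℕ) (ω : Ω) : Fin n → ℤ := fun i => X (i + 1) ω - X i ω

def pathOfIncrements (s₀ : ℤ) {n : ℕ} (x : Fin n → ℤ) (i : ℕ) : ℤ :=
  s₀ + ∑ j ∈ Finset.range i, if h : j < n then x ⟨j, h⟩ else 0

theorem pathOfIncrements_zero (s₀ : ℤ) {n : ℕ} (x : Fin n → ℤ) :
    pathOfIncrements s₀ x 0 = s₀ := by
  simp [pathOfIncrements]

theorem pathOfIncrements_succ (s₀ : ℤ) {n : ℕ} (x : Fin n → ℤ) (i : Fin n) :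
    pathOfIncrements s₀ x (i + 1) = pathOfIncrements s₀ x i + x i := by
  simp [pathOfIncrements, Finset.sum_range_succ, add_assoc]

theorem prod_range_eq_pathWeight (κ : ℤ → ℤ → ℝ≥0∞) {n : ℕ} (x : Fin n → ℤ) {m : ℕ → ℤ}
    (hm : ∀ i : Fin n, m (i + 1) = m i + x i) :
    ∏ i ∈ Finset.range n, κ (m i) (m (i + 1)) =
      pathWeight (fun s k => κ s (s + k)) (m 0) n x := by
  induction n generalizing m with
  | zero => rw [Finset.prod_range_zero, pathWeight_zero]
  | succ n ih =>
    have h1 : m 1 = m 0 + x 0 := hm 0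
    rw [Finset.prod_range_succ', ih (Fin.tail x) fun i => hm i.succ, pathWeight, zero_add, h1,
      mul_comm]

theorem increments_preimage_inter_eq_cylinder (s₀ : ℤ) {n : ℕ} (x : Fin n → ℤ) :
    increments X n ⁻¹' {x} ∩ {ω | ∀ i ≤ 0, X i ω = s₀} =
      {ω | ∀ i ≤ n, X i ω = pathOfIncrements s₀ x i} := by
  ext ω
  simp only [Set.mem_inter_iff, Set.mem_preimage, Set.mem_singleton_iff, Set.mem_ofPred_eq,
    nonpos_iff_eq_zero, forall_eq, funext_iff, increments]
  constructor
  · rintro ⟨hx, h0⟩ i hi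
    induction i with
    | zero => rw [pathOfIncrements_zero, h0]
    | succ i ih =>
      rw [pathOfIncrements_succ s₀ x ⟨i, hi⟩, ← hx ⟨i, hi⟩, ← ih (by omega)]
      ring
  · intro h
    refine ⟨fun i => ?_, by rw [h 0 (Nat.zero_le n), pathOfIncrements_zero]⟩
    rw [h _ i.isLt, h _ i.is_le', pathOfIncrements_succ, add_sub_cancel_left]

variable [MeasurableSpace Ω] {P : Measure Ω}

theorem measurable_increments (hX : ∀ i, Measurable (X i)) (n : ℕ) :
    Measurable (increments X n) :=
  measurable_pi_lambda _ fun _ => (hX _).sub (hX _)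

theorem measurableSet_cylinder (hX : ∀ i, Measurable (X i)) (n : ℕ) (m : ℕ → ℤ) :
    MeasurableSet {ω | ∀ i ≤ n, X i ω = m i} := by
  simp only [Set.ofPred_forall]
  exact .iInter fun i => .iInter fun _ => hX i (measurableSet_singleton _)

variable [IsProbabilityMeasure P] {s₀ : ℤ} {κ : ℤ → ℤ → ℝ≥0∞}
  (hX : ∀ i, Measurable (X i))
  (hcyl : ∀ (n : ℕ) (m : ℕ → ℤ), m 0 = s₀ →
    P {ω | ∀ i ≤ n, X i ω = m i} = ∏ i ∈ Finset.range n, κ (m i) (m (i + 1)))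
include hX hcyl

theorem measure_increments_preimage {n : ℕ} (x : Fin n → ℤ) :
    P (increments X n ⁻¹' {x}) = pathWeight (fun s k => κ s (s + k)) s₀ n x := by
  have h0 : P {ω | ∀ i ≤ 0, X i ω = s₀}ᶜ = 0 := by
    rw [prob_compl_eq_zero_iff (measurableSet_cylinder hX 0 _), hcyl 0 (fun _ => s₀) rfl,
      Finset.prod_range_zero]
  rw [← measure_inter_conull h0, increments_preimage_inter_eq_cylinder,
    hcyl _ _ (pathOfIncrements_zero s₀ x),
    prod_range_eq_pathWeight κ x (pathOfIncrements_succ s₀ x), pathOfIncrements_zero]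

theorem tsum_kernel_add_eq_one {N : ℕ} {m : ℕ → ℤ} (hm0 : m 0 = s₀)
    (hm : ∏ i ∈ Finset.range N, κ (m i) (m (i + 1)) ≠ 0) : ∑' k, κ (m N) (m N + k) = 1 := by
  refine ((Equiv.addLeft (m N)).tsum_eq (κ (m N))).trans ?_
  set E : ℤ → Set Ω := fun t => {ω | ∀ i ≤ N + 1, X i ω = Function.update m (N + 1) t i}
  have hE : ∀ t, P (E t) = (∏ i ∈ Finset.range N, κ (m i) (m (i + 1))) * κ (m N) t := by
    intro t
    rw [hcyl _ _ (by simpa using hm0), Finset.prod_range_succ]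
    refine congrArg₂ _ (Finset.prod_congr rfl fun i hi => ?_) ?_
    · have hi := Finset.mem_range.1 hi
      rw [Function.update_of_ne (by omega), Function.update_of_ne (by omega)]
    · rw [Function.update_of_ne (by omega), Function.update_self]
  have hdisj : Pairwise (Function.onFun Disjoint E) := fun t t' htt' =>
    Set.disjoint_left.2 fun ω h h' => htt' <| by
      simpa using (h (N + 1) le_rfl).symm.trans (h' (N + 1) le_rfl)
  have hunion : ⋃ t, E t = {ω | ∀ i ≤ N, X i ω = m i} := by
    ext ω
    simp only [E, Set.mem_iUnion, Set.mem_ofPred_eq]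
    constructor
    · rintro ⟨t, ht⟩ i hi
      simpa [Function.update_of_ne (show i ≠ N + 1 by omega)] using ht i (by omega)
    · intro h
      refine ⟨X (N + 1) ω, fun i hi => ?_⟩
      rcases (show i ≤ N ∨ i = N + 1 by omega) with hi | rfl
      · rw [Function.update_of_ne (by omega)]; exact h i hi
      · rw [Function.update_self]
  have hsum := measure_iUnion (μ := P) hdisj fun t => measurableSet_cylinder hX _ _
  rw [hunion, hcyl N m hm0] at hsum
  simp_rw [hE, ENNReal.tsum_mul_left] at hsum
  have hfin : ∏ i ∈ Finset.range N, κ (m i) (m (i + 1)) ≠ ⊤ := by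
    rw [← hcyl N m hm0]; exact measure_ne_top _ _
  exact (ENNReal.mul_right_inj hm hfin).1 (hsum.symm.trans (mul_one _).symm)

end Paths

section Integral

variable {Ω : Type*} [MeasurableSpace Ω] {P : Measure Ω}

theorem lintegral_comp_eq_tsum {α : Type*} [MeasurableSpace α] [Countable α]
    [MeasurableSingletonClass α] {Y : Ω → α} (hY : Measurable Y) (f : α → ℝ≥0∞) :
    ∫⁻ ω, f (Y ω) ∂P = ∑' x, P (Y ⁻¹' {x}) * f x := by
  rw [← lintegral_map (measurable_of_countable f) hY, lintegral_countable']
  simp_rw [Measure.map_apply hY (measurableSet_singleton _), mul_comm]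

theorem integral_eq_toReal_lintegral_add_sub [IsProbabilityMeasure P] {f : Ω → ℝ}
    (hf : Measurable f) {M : ℝ} (hM : ∀ ω, |f ω| ≤ M) :
    ∫ ω, f ω ∂P = (∫⁻ ω, ENNReal.ofReal (f ω + M) ∂P).toReal - M := by
  have hint : Integrable f P :=
    .of_bound hf.aestronglyMeasurable M (.of_forall fun ω => hM ω)
  rw [← integral_eq_lintegral_of_nonneg_ae (.of_forall fun ω => by
      simp only [Pi.zero_apply]; linarith [(abs_le.1 (hM ω)).1])
    (hf.add_const M).aestronglyMeasurable, integral_add hint (integrable_const M)]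
  simp

theorem integral_le_integral_of_lintegral_add_le {Ω' : Type*} [MeasurableSpace Ω']
    {P' : Measure Ω'} [IsProbabilityMeasure P] [IsProbabilityMeasure P'] {f : Ω → ℝ}
    {f' : Ω' → ℝ} (hf : Measurable f) (hf' : Measurable f') {M : ℝ} (hM : ∀ ω, |f ω| ≤ M)
    (hM' : ∀ ω, |f' ω| ≤ M)
    (h : ∫⁻ ω, ENNReal.ofReal (f ω + M) ∂P ≤ ∫⁻ ω, ENNReal.ofReal (f' ω + M) ∂P') :
    ∫ ω, f ω ∂P ≤ ∫ ω, f' ω ∂P' := by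
  rw [integral_eq_toReal_lintegral_add_sub hf hM, integral_eq_toReal_lintegral_add_sub hf' hM']
  have hint : Integrable (fun ω => f' ω + M) P' :=
    .of_bound (hf'.add_const M).aestronglyMeasurable (M + M)
      (.of_forall fun ω => by
        rw [Real.norm_eq_abs, abs_le]; constructor <;> linarith [abs_le.1 (hM' ω)])
  exact sub_le_sub_right (ENNReal.toReal_mono hint.lintegral_lt_top.ne h) M

end Integral

theorem tsum_prod_pStep_mul_le_tsum_pathWeight_peelKernel_mul
    (hp : ∑' k, ENNReal.ofReal (pStep k) = 1)
    (hK : ∀ s, 2 ≤ s → ∑' k, ENNReal.ofReal (peelKernel s (s + k)) = 1)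
    {M : ℝ≥0∞} (hM : M ≠ ⊤) (n : ℕ) {s : ℤ} (hs : 2 ≤ s) {F : (Fin n → ℤ) → ℝ≥0∞}
    (hF : Monotone F) (hFM : ∀ x, F x ≤ M) :
    ∑' x, (∏ i, ENNReal.ofReal (pStep (x i))) * F x ≤
      ∑' x, pathWeight (fun s k => ENNReal.ofReal (peelKernel s (s + k))) s n x * F x :=
  tsum_prod_mul_le_tsum_pathWeight_mul (A := {s | 2 ≤ s})
    (ρ := fun s k => ENNReal.ofReal (hFun (s + k - 1) / hFun (s - 1))) hp hK
    (fun s _ k => by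
      rw [peelKernel_add, ENNReal.ofReal_mul (div_nonneg (hFun_nonneg _) (hFun_nonneg _))])
    (fun s _ k k' hk => ENNReal.ofReal_le_ofReal
      (div_le_div_of_nonneg_right (hFun_monotone (by omega)) (hFun_nonneg _)))
    (fun s _ k hk => two_le_of_peelKernel_ne_zero fun h => hk (by rw [h, ENNReal.ofReal_zero]))
    hM n s hs F hF hFM

/-- The increments of the h-transformed peeling chain started at `s₀ ≥ 2` stochastically
dominate the increments of the unconditioned random walk with step distribution `(p_k)`
started at `s₀`: for every `n` and every bounded measurable `F : ℤⁿ → ℝ` which is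
non-decreasing in each coordinate (i.e. monotone for the pointwise order),
`E_peel[F(S₁-S₀,…,Sₙ-Sₙ₋₁)] ≥ E_rw[F(Ŝ₁-Ŝ₀,…,Ŝₙ-Ŝₙ₋₁)]`. -/
theorem peeling_increments_dominate_rw_increments
    {Ω₁ : Type*} [MeasurableSpace Ω₁] (P₁ : Measure Ω₁) [IsProbabilityMeasure P₁]
    {Ω₂ : Type*} [MeasurableSpace Ω₂] (P₂ : Measure Ω₂) [IsProbabilityMeasure P₂]
    (s₀ : ℤ) (hs₀ : 2 ≤ s₀)
    (S : ℕ → Ω₁ → ℤ) (hSmeas : ∀ i, Measurable (S i))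
    (hSfdd : ∀ (n : ℕ) (m : ℕ → ℤ), m 0 = s₀ →
      P₁ {ω | ∀ i ≤ n, S i ω = m i} =
        ENNReal.ofReal (∏ i ∈ Finset.range n, peelKernel (m i) (m (i + 1))))
    (W : ℕ → Ω₂ → ℤ) (hWmeas : ∀ i, Measurable (W i))
    (hWfdd : ∀ (n : ℕ) (m : ℕ → ℤ), m 0 = s₀ →
      P₂ {ω | ∀ i ≤ n, W i ω = m i} =
        ENNReal.ofReal (∏ i ∈ Finset.range n, pStep (m (i + 1) - m i))) :
    ∀ (n : ℕ) (F : (Fin n → ℤ) → ℝ), Measurable F → Monotone F →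
      (∃ M : ℝ, ∀ x, |F x| ≤ M) →
      ∫ ω, F (fun i : Fin n => W ((i : ℕ) + 1) ω - W (i : ℕ) ω) ∂P₂ ≤
        ∫ ω, F (fun i : Fin n => S ((i : ℕ) + 1) ω - S (i : ℕ) ω) ∂P₁ := by
  intro n F hFmeas hFmono ⟨M, hM⟩
  have hcylS (n : ℕ) (m : ℕ → ℤ) (hm : m 0 = s₀) := (hSfdd n m hm).trans
    (ENNReal.ofReal_prod_of_nonneg fun i _ => peelKernel_nonneg _ _)
  have hcylW (n : ℕ) (m : ℕ → ℤ) (hm : m 0 = s₀) := (hWfdd n m hm).trans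
    (ENNReal.ofReal_prod_of_nonneg fun i _ => pStep_nonneg _)
  have hp : ∑' k, ENNReal.ofReal (pStep k) = 1 := by
    simpa only [add_sub_cancel_left] using
      tsum_kernel_add_eq_one (κ := fun s t => ENNReal.ofReal (pStep (t - s))) hWmeas hcylW
        (N := 0) (m := fun _ => s₀) rfl (by simp)
  have hK (s : ℤ) (hs : 2 ≤ s) : ∑' k, ENNReal.ofReal (peelKernel s (s + k)) = 1 := by
    obtain ⟨N, m, hm0, rfl, hpos⟩ := exists_path_peelKernel_pos hs₀ hs
    exact tsum_kernel_add_eq_one (κ := fun s t => ENNReal.ofReal (peelKernel s t)) hSmeas hcylS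
      hm0 <| Finset.prod_ne_zero_iff.2 fun i hi =>
        (ENNReal.ofReal_pos.2 (hpos i (Finset.mem_range.1 hi))).ne'
  refine integral_le_integral_of_lintegral_add_le (f := fun ω => F (increments W n ω))
    (f' := fun ω => F (increments S n ω)) (hFmeas.comp (measurable_increments hWmeas n))
    (hFmeas.comp (measurable_increments hSmeas n)) (fun _ => hM _) (fun _ => hM _) ?_
  rw [lintegral_comp_eq_tsum (measurable_increments hWmeas n) fun x => ENNReal.ofReal (F x + M),
    lintegral_comp_eq_tsum (measurable_increments hSmeas n) fun x => ENNReal.ofReal (F x + M)]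
  simp_rw [
    measure_increments_preimage (κ := fun s t => ENNReal.ofReal (pStep (t - s))) hWmeas hcylW,
    measure_increments_preimage (κ := fun s t => ENNReal.ofReal (peelKernel s t)) hSmeas hcylS,
    add_sub_cancel_left, pathWeight_const]
  exact tsum_prod_pStep_mul_le_tsum_pathWeight_peelKernel_mul hp hK ENNReal.ofReal_ne_top n hs₀
    (fun x y h => ENNReal.ofReal_le_ofReal (by linarith [hFmono h]))
    fun x => ENNReal.ofReal_le_ofReal (q := M + M) (by linarith [le_of_abs_le (hM x)])
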